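/- Let Q_k(m) be the polynomials defined by (1/2^m)·Σ_{r=0}^m binom(m,r)·r^k = (m/2^k)·Q_{k−1}(m) for k ≥ 1 and satisfying the recursion Q_k(m) = 2m·Q_{k−1}(m) − (m−1)·Q_{k−1}(m−1) with Q_0 = 1. Then for every k ≥ 1, Q_k is a monic polynomial of degree k and its coefficient of m^{k−1} equals k(k+1)/2. -/
import Mathlib
open Polynomial

lemma aux_comp (P : Polynomial ℝ) (n : ℕ) (hn : 1 ≤ n) (hm : P.Monic) (hd : P.natDegree = n) :
    (P.comp (X - 1)).Monic ∧ (P.comp (X - 1)).natDegree = n ∧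
    (P.comp (X - 1)).coeff (n - 1) = P.coeff (n - 1) - n := by
  have hX : (X - 1 : Polynomial ℝ) = X - C 1 := by simp
  have hq : (X - C (1:ℝ)).natDegree = 1 := natDegree_X_sub_C 1
  refine ⟨?_, ?_, ?_⟩
  · rw [hX]; exact hm.comp (monic_X_sub_C 1) (by rw [hq]; norm_num)
  · rw [hX, natDegree_comp, hq, hd, mul_one]
  · have ht : P.comp (X - 1) = taylor (-1) P := by
      rw [taylor_apply, hX]; congr 1; simp [sub_eq_add_neg]
    rw [ht, taylor_coeff]
    have hh : hasseDeriv (n - 1) P = C (P.coeff (n - 1)) + C (n : ℝ) * X := by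
      ext i
      rw [hasseDeriv_coeff]
      match i with
      | 0 => simp
      | 1 =>
        have h1 : 1 + (n - 1) = n := by omega
        have hc : n.choose (n - 1) = n := by
          rw [← Nat.choose_symm (show n - 1 ≤ n by omega)]
          have : n - (n - 1) = 1 := by omega
          rw [this, Nat.choose_one_right]
        have hcn : P.coeff n = 1 := by rw [← hd]; exact hm.coeff_natDegree
        rw [h1, hc, hcn]
        simp
      | (m+2) =>
        have : P.natDegree < m + 2 + (n - 1) := by omega
        rw [coeff_eq_zero_of_natDegree_lt this]
        simp [coeff_X, coeff_C]
    rw [hh]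
    simp
    ring

theorem stmt_17 (Q : ℕ → Polynomial ℝ) (hQ0 : Q 0 = 1)
    (hrec : ∀ k : ℕ, 1 ≤ k →
      Q k = Polynomial.C 2 * Polynomial.X * Q (k - 1)
        - (Polynomial.X - 1) * ((Q (k - 1)).comp (Polynomial.X - 1))) :
    ∀ k : ℕ, 1 ≤ k →
      (Q k).Monic ∧ (Q k).degree = k ∧
        (Q k).coeff (k - 1) = (k : ℝ) * ((k : ℝ) + 1) / 2 := by
  intro k hk
  induction k, hk using Nat.le_induction with
  | base =>
    have h1 : Q 1 = X + C 1 := by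
      rw [hrec 1 le_rfl, hQ0]
      simp only [one_comp, mul_one, map_one, map_ofNat]
      ring
    refine ⟨?_, ?_, ?_⟩
    · rw [h1]; exact monic_X_add_C 1
    · rw [h1, degree_X_add_C]; rfl
    · rw [h1]; norm_num
  | succ k hk ih =>
    obtain ⟨hm, hdeg, hc⟩ := ih
    have hnd : (Q k).natDegree = k := natDegree_eq_of_degree_eq_some hdeg
    obtain ⟨hm', hnd', hc'⟩ := aux_comp (Q k) k hk hm hnd
    have hrw := hrec (k + 1) (by omega)
    simp only [Nat.add_sub_cancel] at hrw
    have hQcoeff : ∀ j, (Q (k+1)).coeff (j+1) =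
        2 * (Q k).coeff j - ((Q k).comp (X-1)).coeff j
          + ((Q k).comp (X-1)).coeff (j+1) := by
      intro j
      rw [hrw]
      simp only [coeff_sub, sub_mul, one_mul, mul_assoc, coeff_C_mul, coeff_X_mul]
      ring
    have hQk1 : (Q k).coeff k = 1 := by simpa only [hnd] using hm.coeff_natDegree
    have hPck : ((Q k).comp (X-1)).coeff k = 1 := by simpa only [hnd'] using hm'.coeff_natDegree
    have hPck1 : ((Q k).comp (X-1)).coeff (k+1) = 0 :=
      coeff_eq_zero_of_natDegree_lt (by omega)
    have hlead : (Q (k+1)).coeff (k+1) = 1 := by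
      rw [hQcoeff k, hQk1, hPck, hPck1]; ring
    have hndle : (Q (k+1)).natDegree ≤ k + 1 := by
      rw [hrw]
      refine le_trans (natDegree_sub_le _ _) (max_le ?_ ?_)
      · refine le_trans natDegree_mul_le ?_
        have h2 : (C (2:ℝ) * X).natDegree ≤ 1 :=
          le_trans (natDegree_C_mul_le _ _) (by simp)
        omega
      · refine le_trans natDegree_mul_le ?_
        have h2 : ((X : Polynomial ℝ) - 1).natDegree ≤ 1 := by
          have : (X - 1 : Polynomial ℝ) = X - C 1 := by simp
          rw [this, natDegree_X_sub_C]
        omega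
    have hnat : (Q (k+1)).natDegree = k + 1 :=
      le_antisymm hndle (le_natDegree_of_ne_zero (by rw [hlead]; norm_num))
    have hmon : (Q (k+1)).Monic := by
      have : (Q (k+1)).leadingCoeff = 1 := by rw [leadingCoeff, hnat, hlead]
      exact this
    refine ⟨hmon, ?_, ?_⟩
    · rw [degree_eq_natDegree hmon.ne_zero, hnat]
    · simp only [Nat.add_sub_cancel]
      have hkk : k - 1 + 1 = k := by omega
      have h := hQcoeff (k - 1)
      rw [hkk] at h
      rw [h, hc', hc, hPck]
      push_cast
      ring
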